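/- Let P_1, …, P_N be discrete probability measures on ℝ^d and λ_1, …, λ_N > 0 with ∑_{i=1}^N λ_i = 1. Then every barycenter P̄ of P_1, …, P_N is supported in the finite set S = {∑_{i=1}^N λ_i x_i : x_i ∈ supp(P_i)} of weighted centroids of combinations of support points, one from each measure; in particular every barycenter has finite support. -/

import Mathlib

open MeasureTheory ENNReal

/-- Points of `ℝ^d`. -/
abbrev Pt (d : ℕ) := EuclideanSpace ℝ (Fin d)

/-- The set of atoms (support points) of a measure. -/
def msupp {α : Type*} [MeasurableSpace α] (P : Measure α) : Set α := {x | P {x} ≠ 0}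

/-- A measure is finitely supported (discrete) if its set of atoms is finite and
carries all the mass. -/
def FinitelySupported {α : Type*} [MeasurableSpace α] (P : Measure α) : Prop :=
  (msupp P).Finite ∧ P (msupp P)ᶜ = 0

/-- Finite second moment. -/
def FiniteSecondMoment {d : ℕ} (P : Measure (Pt d)) : Prop :=
  ∫⁻ x, ENNReal.ofReal (‖x‖ ^ 2) ∂P < ⊤

/-- The squared 2-Wasserstein distance: the infimum of `∫ ‖x - y‖² dπ` over all
couplings `π` of `P` and `Q`. -/
noncomputable def W2sq {d : ℕ} (P Q : Measure (Pt d)) : ℝ≥0∞ :=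
  ⨅ π ∈ {π : Measure (Pt d × Pt d) | π.map Prod.fst = P ∧ π.map Prod.snd = Q},
    ∫⁻ p, ENNReal.ofReal (‖p.1 - p.2‖ ^ 2) ∂π

/-- The barycenter objective `φ(P) = ∑ i, λ i * W₂(P, P i)²`. -/
noncomputable def phi {d N : ℕ} (l : Fin N → ℝ) (Pm : Fin N → Measure (Pt d))
    (P : Measure (Pt d)) : ℝ≥0∞ :=
  ∑ i, ENNReal.ofReal (l i) * W2sq P (Pm i)

/-- A (Wasserstein) barycenter: a probability measure with finite second moment
minimizing `φ` among all such measures. -/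
def IsBarycenter {d N : ℕ} (l : Fin N → ℝ) (Pm : Fin N → Measure (Pt d))
    (P : Measure (Pt d)) : Prop :=
  IsProbabilityMeasure P ∧ FiniteSecondMoment P ∧
    ∀ Q : Measure (Pt d), IsProbabilityMeasure Q → FiniteSecondMoment Q →
      phi l Pm P ≤ phi l Pm Q

/-- The set `S` of weighted centroids of combinations of support points,
one from each measure. -/
def centroidSet {d N : ℕ} (l : Fin N → ℝ) (Pm : Fin N → Measure (Pt d)) : Set (Pt d) :=
  {y | ∃ x : Fin N → Pt d, (∀ i, x i ∈ msupp (Pm i)) ∧ y = ∑ i, l i • x i}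

/-- The union `S_org` of the supports of the measures. -/
def origSupport {d N : ℕ} (Pm : Fin N → Measure (Pt d)) : Set (Pt d) :=
  ⋃ i, msupp (Pm i)

/-! Take ε-optimal couplings of `P̄` with each `Pᵢ` and glue them into one measure `Γ` on
`(x, y₁, …, y_N)`, making the `yᵢ` conditionally independent given `x`; since the `Pᵢ` are
discrete, this only needs finitely many conditional densities. The pointwise identity
`∑ λᵢ ‖x - yᵢ‖² = ‖x - m(y)‖² + ∑ λᵢ ‖m(y) - yᵢ‖²` for the centroid `m(y) = ∑ λᵢ yᵢ` then gives
`φ(Q) + ∫ ‖x - m(y)‖² dΓ ≤ φ(P̄) + ε`, where `Q = m₊Γ` is a competitor carried by `S`.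
Minimality of `P̄` yields `∫ d(x, S)² dP̄ ≤ ε` for every `ε > 0`, so `P̄` lives on the finite,
hence closed, set `S`. -/

theorem Finset.sum_filter_piFinset_prod_eq {ι κ R : Type*} [Fintype ι] [DecidableEq ι]
    [DecidableEq κ] [CommSemiring R] {F : ι → Finset κ} {g : ι → κ → R}
    (hg : ∀ j, ∑ z ∈ F j, g j z = 1) {i : ι} {y : κ} (hy : y ∈ F i) :
    ∑ σ ∈ Fintype.piFinset F with σ i = y, ∏ j, g j (σ j) = g i y := by
  have hfilter : {σ ∈ Fintype.piFinset F | σ i = y}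
      = Fintype.piFinset (Function.update F i {y}) := by
    ext σ
    simp only [Finset.mem_filter, Fintype.mem_piFinset]
    constructor
    · rintro ⟨hσ, rfl⟩ j
      rcases eq_or_ne j i with rfl | hj <;> simp [*]
    · intro hσ
      have hσi : σ i = y := by simpa using hσ i
      refine ⟨fun j => ?_, hσi⟩
      rcases eq_or_ne j i with rfl | hj
      · exact hσi ▸ hy
      · simpa [hj] using hσ j
  have hfactor : (fun j => ∑ z ∈ Function.update F i {y} j, g j z) = Pi.mulSingle i (g i y) := by
    ext j
    rcases eq_or_ne j i with rfl | hj <;> simp [*]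
  rw [hfilter, ← Finset.prod_univ_sum, hfactor, Finset.prod_pi_mulSingle']
  simp

namespace MeasureTheory

variable {X Y : Type*} [MeasurableSpace X] [MeasurableSpace Y]

theorem withDensity_finsetSum {ι : Type*} (μ : Measure X) (s : Finset ι) {f : ι → X → ℝ≥0∞}
    (hf : ∀ i ∈ s, Measurable (f i)) :
    μ.withDensity (∑ i ∈ s, f i) = ∑ i ∈ s, μ.withDensity (f i) := by
  ext t ht
  simp only [withDensity_apply _ ht, Measure.coe_finsetSum, Finset.sum_apply]
  exact lintegral_finsetSum s hf

theorem Measure.eq_sum_map_prodMk_of_ae_snd_mem [MeasurableSingletonClass Y]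
    (π : Measure (X × Y)) (F : Finset Y) (hF : ∀ᵐ p ∂π, p.2 ∈ F) :
    π = ∑ y ∈ F, ((π.restrict (Prod.snd ⁻¹' {y})).map Prod.fst).map (fun x => (x, y)) := by
  have hslice : ∀ y, ((π.restrict (Prod.snd ⁻¹' {y})).map Prod.fst).map (fun x => (x, y))
      = π.restrict (Prod.snd ⁻¹' {y}) := by
    intro y
    rw [Measure.map_map (by fun_prop) measurable_fst]
    conv_rhs => rw [← Measure.map_id (μ := π.restrict _)]
    refine Measure.map_congr ?_
    filter_upwards [ae_restrict_mem (measurable_snd (measurableSet_singleton y))] with p hp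
    exact Prod.ext rfl hp.symm
  simp only [hslice]
  conv_lhs => rw [← Measure.restrict_eq_self_of_ae_mem (s := Prod.snd ⁻¹' (F : Set Y)) hF]
  have hfibers : Prod.snd ⁻¹' (F : Set Y) = (⋃ y ∈ F, Prod.snd ⁻¹' {y} : Set (X × Y)) := by
    ext; simp
  rw [hfibers, Measure.restrict_biUnion_finset]
  · exact Measure.sum_coe_finset F fun y => π.restrict (Prod.snd ⁻¹' {y})
  · exact fun a _ b _ hab => Disjoint.preimage _ (Set.disjoint_singleton.2 hab)
  · exact fun y => measurable_snd (measurableSet_singleton y)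

theorem Measure.exists_density_decomposition [MeasurableSingletonClass Y] {P : Measure X}
    [IsFiniteMeasure P] {π : Measure (X × Y)} (hπ : π.map Prod.fst = P) (F : Finset Y)
    (hF : ∀ᵐ p ∂π, p.2 ∈ F) :
    ∃ f : Y → X → ℝ≥0∞, (∀ y, Measurable (f y)) ∧ ∑ y ∈ F, f y =ᵐ[P] 1 ∧
      π = ∑ y ∈ F, (P.withDensity (f y)).map (fun x => (x, y)) := by
  set μ : Y → Measure X := fun y => (π.restrict (Prod.snd ⁻¹' {y})).map Prod.fst
  have hμP : ∀ y, μ y ≤ P := fun y =>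
    hπ ▸ Measure.map_mono Measure.restrict_le_self measurable_fst
  have hdensity : ∀ y, P.withDensity ((μ y).rnDeriv P) = μ y := fun y =>
    have : IsFiniteMeasure (μ y) := isFiniteMeasure_of_le _ (hμP y)
    Measure.withDensity_rnDeriv_eq _ _ (Measure.absolutelyContinuous_of_le (hμP y))
  have hdecomp := π.eq_sum_map_prodMk_of_ae_snd_mem F hF
  refine ⟨fun y => (μ y).rnDeriv P, fun y => Measure.measurable_rnDeriv _ _, ?_, ?_⟩
  · have hsum : P.withDensity (∑ y ∈ F, (μ y).rnDeriv P) = P.withDensity 1 := by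
      rw [withDensity_finsetSum _ _ fun y _ => Measure.measurable_rnDeriv _ _, withDensity_one]
      conv_rhs => rw [← hπ, hdecomp, Measure.map_finset_sum measurable_fst.aemeasurable]
      refine Finset.sum_congr rfl fun y _ => ?_
      rw [hdensity, Measure.map_map measurable_fst (by fun_prop)]
      exact Measure.map_id.symm
    exact (withDensity_eq_iff_of_sigmaFinite (by fun_prop) aemeasurable_one).1 hsum
  · simp_rw [hdensity]
    exact hdecomp

theorem Measure.exists_gluing {ι : Type*} [Fintype ι] [MeasurableSingletonClass Y]
    {P : Measure X} [IsFiniteMeasure P] {π : ι → Measure (X × Y)}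
    (hπ : ∀ i, (π i).map Prod.fst = P) (F : ι → Finset Y) (hF : ∀ i, ∀ᵐ p ∂(π i), p.2 ∈ F i) :
    ∃ Γ : Measure (X × (ι → Y)), Γ.map Prod.fst = P ∧
      (∀ i, Γ.map (fun p => (p.1, p.2 i)) = π i) ∧ ∀ᵐ p ∂Γ, ∀ i, p.2 i ∈ F i := by
  classical
  choose f hfm hfsum hπf using fun i => exists_density_decomposition (hπ i) (F i) (hF i)
  -- `g σ` is the conditional probability of `(y_i)_i = σ` given `x`, the `y_i` being independent.
  set g : (ι → Y) → X → ℝ≥0∞ := fun σ x => ∏ j, f j (σ j) x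
  have hgm : ∀ σ, Measurable (g σ) := fun σ => Finset.measurable_prod _ fun j _ => hfm j (σ j)
  have hfae : ∀ᵐ x ∂P, ∀ i, ∑ y ∈ F i, f i y x = 1 :=
    ae_all_iff.2 fun i => (hfsum i).mono fun x hx => by simpa using hx
  refine ⟨∑ σ ∈ Fintype.piFinset F, (P.withDensity (g σ)).map (fun x => (x, σ)), ?_,
    fun i => ?_, ?_⟩
  · have hfst : ∀ σ, ((P.withDensity (g σ)).map fun x => (x, σ)).map Prod.fst
        = P.withDensity (g σ) := fun σ => by
      rw [Measure.map_map measurable_fst (by fun_prop)]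
      exact Measure.map_id
    rw [Measure.map_finset_sum (by fun_prop)]
    simp_rw [hfst]
    rw [← withDensity_finsetSum _ _ fun σ _ => hgm σ]
    refine (withDensity_congr_ae (hfae.mono fun x hx => ?_)).trans withDensity_one
    simp only [Finset.sum_apply, Pi.one_apply, g]
    rw [← Finset.prod_univ_sum (t := F) (f := fun j z => f j z x)]
    exact Finset.prod_eq_one fun i _ => hx i
  · rw [Measure.map_finset_sum (by fun_prop), hπf i,
      ← Finset.sum_fiberwise_of_maps_to (g := fun σ => σ i) (t := F i)
        fun σ hσ => Fintype.mem_piFinset.1 hσ i]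
    refine Finset.sum_congr rfl fun y hy => ?_
    have hfiber : ∀ σ ∈ {σ ∈ Fintype.piFinset F | σ i = y},
        ((P.withDensity (g σ)).map fun x => (x, σ)).map (fun p => (p.1, p.2 i))
          = (P.withDensity (g σ)).map fun x => (x, y) := by
      intro σ hσ
      rw [Measure.map_map (by fun_prop) (by fun_prop)]
      simp [Function.comp_def, (Finset.mem_filter.1 hσ).2]
    rw [Finset.sum_congr rfl hfiber, ← Measure.map_finset_sum (by fun_prop),
      ← withDensity_finsetSum _ _ fun σ _ => hgm σ]
    congr 1
    refine withDensity_congr_ae (hfae.mono fun x hx => ?_)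
    simpa [g] using Finset.sum_filter_piFinset_prod_eq (g := fun j z => f j z x) hx hy
  · have hmeas : MeasurableSet {p : X × (ι → Y) | ∀ i, p.2 i ∈ F i} := by
      simp only [Set.ofPred_forall]
      exact MeasurableSet.iInter fun i =>
        (by fun_prop : Measurable fun p : X × (ι → Y) => p.2 i) (F i).measurableSet
    refine ae_finsetSum_measure_iff.2 fun σ hσ => ?_
    rw [ae_map_iff (by fun_prop) hmeas]
    exact ae_of_all _ fun _ => Fintype.mem_piFinset.1 hσ

end MeasureTheory

theorem sum_mul_norm_sub_sq_eq {ι E : Type*} [Fintype ι] [NormedAddCommGroup E]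
    [InnerProductSpace ℝ E] {l : ι → ℝ} (hl : ∑ i, l i = 1) (y : ι → E) (x : E) :
    ∑ i, l i * ‖x - y i‖ ^ 2
      = ‖x - ∑ i, l i • y i‖ ^ 2 + ∑ i, l i * ‖∑ j, l j • y j - y i‖ ^ 2 := by
  set m := ∑ i, l i • y i
  have hcross : ∑ i, l i * inner ℝ (x - m) (m - y i) = 0 := by
    have hbalance : ∑ i, l i • (m - y i) = 0 := by
      rw [Finset.sum_congr rfl fun i _ => smul_sub (l i) m (y i), Finset.sum_sub_distrib,
        ← Finset.sum_smul, hl, one_smul, sub_self]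
    simp_rw [← real_inner_smul_right, ← inner_sum, hbalance, inner_zero_right]
  calc ∑ i, l i * ‖x - y i‖ ^ 2
      = ∑ i, (l i * ‖x - m‖ ^ 2 + 2 * (l i * inner ℝ (x - m) (m - y i))
          + l i * ‖m - y i‖ ^ 2) := by
        refine Finset.sum_congr rfl fun i _ => ?_
        rw [← sub_add_sub_cancel x m (y i), norm_add_sq_real]
        ring
    _ = ‖x - m‖ ^ 2 + ∑ i, l i * ‖m - y i‖ ^ 2 := by
        rw [Finset.sum_add_distrib, Finset.sum_add_distrib, ← Finset.sum_mul, ← Finset.mul_sum,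
          hl, hcross]
        ring

theorem sum_ofReal_mul_norm_sub_sq_eq {ι E : Type*} [Fintype ι] [NormedAddCommGroup E]
    [InnerProductSpace ℝ E] {l : ι → ℝ} (hl : ∀ i, 0 ≤ l i) (hsum : ∑ i, l i = 1) (y : ι → E)
    (x : E) :
    ∑ i, ENNReal.ofReal (l i) * ENNReal.ofReal (‖x - y i‖ ^ 2)
      = ENNReal.ofReal (‖x - ∑ i, l i • y i‖ ^ 2)
        + ∑ i, ENNReal.ofReal (l i) * ENNReal.ofReal (‖∑ j, l j • y j - y i‖ ^ 2) := by
  have hcast : ∀ z : E, ∑ i, ENNReal.ofReal (l i) * ENNReal.ofReal (‖z - y i‖ ^ 2)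
      = ENNReal.ofReal (∑ i, l i * ‖z - y i‖ ^ 2) := fun z => by
    rw [ENNReal.ofReal_sum_of_nonneg fun i _ => mul_nonneg (hl i) (sq_nonneg _)]
    simp_rw [ENNReal.ofReal_mul (hl _)]
  rw [hcast, hcast, sum_mul_norm_sub_sq_eq hsum, ENNReal.ofReal_add (sq_nonneg _)
    (Finset.sum_nonneg fun i _ => mul_nonneg (hl i) (sq_nonneg _))]

theorem lintegral_ofReal_norm_sub_sq_lt_top {E : Type*} [NormedAddCommGroup E]
    [MeasurableSpace E] (μ : Measure E) [IsFiniteMeasure μ] {s : Set E}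
    (hs : Bornology.IsBounded s) (hμs : ∀ᵐ x ∂μ, x ∈ s) (a : E) :
    ∫⁻ x, ENNReal.ofReal (‖x - a‖ ^ 2) ∂μ < ⊤ := by
  obtain ⟨r, hr⟩ := hs.subset_closedBall a
  calc ∫⁻ x, ENNReal.ofReal (‖x - a‖ ^ 2) ∂μ ≤ ∫⁻ _, ENNReal.ofReal (r ^ 2) ∂μ := by
        refine lintegral_mono_ae (hμs.mono fun x hx => ENNReal.ofReal_le_ofReal ?_)
        have := mem_closedBall_iff_norm.1 (hr hx)
        gcongr
    _ < ⊤ := by simp [lintegral_const, ENNReal.mul_lt_top]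

theorem msupp_subset_of_ae_mem {α : Type*} [MeasurableSpace α] {μ : Measure α} {s : Set α}
    (h : ∀ᵐ x ∂μ, x ∈ s) : msupp μ ⊆ s := fun x hx => by
  by_contra hxs
  exact hx (measure_mono_null (Set.singleton_subset_iff.2 hxs) h)

theorem ae_mem_of_lintegral_infEDist_sq_eq_zero {α : Type*} [PseudoEMetricSpace α]
    [MeasurableSpace α] [OpensMeasurableSpace α] {μ : Measure α} {s : Set α} (hs : IsClosed s)
    (h : ∫⁻ x, Metric.infEDist x s ^ 2 ∂μ = 0) : ∀ᵐ x ∂μ, x ∈ s := by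
  filter_upwards [(lintegral_eq_zero_iff (by fun_prop)).1 h] with x hx
  exact (Metric.mem_iff_infEDist_zero_of_closed hs).2 (pow_eq_zero_iff two_ne_zero |>.1 hx)

section Wasserstein

variable {d : ℕ}

theorem W2sq_map_le {α : Type*} [MeasurableSpace α] (μ : Measure α) {f g : α → Pt d}
    (hf : Measurable f) (hg : Measurable g) :
    W2sq (μ.map f) (μ.map g) ≤ ∫⁻ a, ENNReal.ofReal (‖f a - g a‖ ^ 2) ∂μ := by
  have hfg : Measurable fun a => (f a, g a) := hf.prodMk hg
  refine (iInf₂_le (μ.map fun a => (f a, g a))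
    ⟨Measure.map_map measurable_fst hfg, Measure.map_map measurable_snd hfg⟩).trans_eq ?_
  exact lintegral_map (by fun_prop) hfg

theorem exists_coupling_lintegral_lt {P Q : Measure (Pt d)} {ε : ℝ≥0∞} (hW : W2sq P Q ≠ ⊤)
    (hε : ε ≠ 0) :
    ∃ π : Measure (Pt d × Pt d), π.map Prod.fst = P ∧ π.map Prod.snd = Q ∧
      ∫⁻ p, ENNReal.ofReal (‖p.1 - p.2‖ ^ 2) ∂π < W2sq P Q + ε := by
  obtain ⟨π, hπ⟩ := iInf_lt_iff.1 (ENNReal.lt_add_right hW hε)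
  obtain ⟨hπ, hlt⟩ := iInf_lt_iff.1 hπ
  exact ⟨π, hπ.1, hπ.2, hlt⟩

theorem finiteSecondMoment_of_ae_mem {P : Measure (Pt d)} [IsFiniteMeasure P] {s : Set (Pt d)}
    (hs : Bornology.IsBounded s) (hPs : ∀ᵐ x ∂P, x ∈ s) : FiniteSecondMoment P := by
  simpa [FiniteSecondMoment] using lintegral_ofReal_norm_sub_sq_lt_top P hs hPs 0

end Wasserstein

section Barycenter

variable {d N : ℕ} {l : Fin N → ℝ} {Pm : Fin N → Measure (Pt d)}

theorem centroidSet_finite (hfin : ∀ i, (msupp (Pm i)).Finite) : (centroidSet l Pm).Finite := by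
  refine ((Set.Finite.pi hfin).image fun x => ∑ i, l i • x i).subset ?_
  rintro y ⟨x, hx, rfl⟩
  exact ⟨x, fun i _ => hx i, rfl⟩

theorem phi_dirac_lt_top (hprob : ∀ i, IsProbabilityMeasure (Pm i))
    (hfin : ∀ i, FinitelySupported (Pm i)) (a : Pt d) : phi l Pm (Measure.dirac a) < ⊤ := by
  refine ENNReal.sum_lt_top.2 fun i _ => ENNReal.mul_lt_top ENNReal.ofReal_lt_top ?_
  have h := W2sq_map_le (Pm i) (measurable_const (a := a)) measurable_id
  rw [Measure.map_const, measure_univ, one_smul, Measure.map_id] at h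
  refine h.trans_lt ?_
  simp_rw [norm_sub_rev a]
  exact lintegral_ofReal_norm_sub_sq_lt_top _ (hfin i).1.isBounded (hfin i).2 a

theorem IsBarycenter.phi_lt_top {P : Measure (Pt d)} (hbar : IsBarycenter l Pm P)
    (hprob : ∀ i, IsProbabilityMeasure (Pm i)) (hfin : ∀ i, FinitelySupported (Pm i)) :
    phi l Pm P < ⊤ :=
  (hbar.2.2 _ inferInstance (finiteSecondMoment_of_ae_mem (Set.finite_singleton 0).isBounded
    (ae_dirac_iff (measurableSet_singleton 0) |>.2 rfl))).trans_lt (phi_dirac_lt_top hprob hfin 0)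

theorem W2sq_ne_top_of_phi_ne_top {P : Measure (Pt d)} {i : Fin N} (hl : 0 < l i)
    (h : phi l Pm P ≠ ⊤) : W2sq P (Pm i) ≠ ⊤ := by
  have hle : ENNReal.ofReal (l i) * W2sq P (Pm i) ≤ phi l Pm P :=
    Finset.single_le_sum (f := fun j => ENNReal.ofReal (l j) * W2sq P (Pm j))
      (fun j _ => zero_le) (Finset.mem_univ i)
  exact fun htop => h (top_le_iff.1 (by simpa [htop, ENNReal.mul_top, hl] using hle))

theorem exists_multicoupling_lintegral_le {P : Measure (Pt d)} [IsFiniteMeasure P]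
    (hl : ∀ i, 0 < l i) (hsum : ∑ i, l i = 1) (hfin : ∀ i, FinitelySupported (Pm i))
    (hφ : phi l Pm P ≠ ⊤) {ε : ℝ≥0∞} (hε : ε ≠ 0) :
    ∃ Γ : Measure (Pt d × (Fin N → Pt d)), Γ.map Prod.fst = P ∧
      (∀ i, Γ.map (fun p => p.2 i) = Pm i) ∧ (∀ᵐ p ∂Γ, ∀ i, p.2 i ∈ msupp (Pm i)) ∧
      ∑ i, ENNReal.ofReal (l i) * ∫⁻ p, ENNReal.ofReal (‖p.1 - p.2 i‖ ^ 2) ∂Γ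
        ≤ phi l Pm P + ε := by
  choose π hπ1 hπ2 hπε using fun i =>
    exists_coupling_lintegral_lt (W2sq_ne_top_of_phi_ne_top (hl i) hφ) hε
  obtain ⟨Γ, hΓ1, hΓ2, hΓS⟩ := Measure.exists_gluing hπ1 (fun i => (hfin i).1.toFinset)
    fun i => by
      have hsupp : ∀ᵐ y ∂(π i).map Prod.snd, y ∈ msupp (Pm i) := hπ2 i ▸ (hfin i).2
      simpa using ae_of_ae_map measurable_snd.aemeasurable hsupp
  have hcost : ∀ i, ∫⁻ p, ENNReal.ofReal (‖p.1 - p.2 i‖ ^ 2) ∂Γ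
      = ∫⁻ p, ENNReal.ofReal (‖p.1 - p.2‖ ^ 2) ∂(π i) := fun i => by
    rw [← hΓ2 i, lintegral_map (by fun_prop) (by fun_prop)]
  have hweights : ∑ i, ENNReal.ofReal (l i) = 1 := by
    rw [← ENNReal.ofReal_sum_of_nonneg fun i _ => (hl i).le, hsum, ENNReal.ofReal_one]
  refine ⟨Γ, hΓ1, fun i => ?_, hΓS.mono fun p hp i => by simpa using hp i, ?_⟩
  · rw [← hπ2 i, ← hΓ2 i, Measure.map_map measurable_snd (by fun_prop)]
    rfl
  calc ∑ i, ENNReal.ofReal (l i) * ∫⁻ p, ENNReal.ofReal (‖p.1 - p.2 i‖ ^ 2) ∂Γ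
      ≤ ∑ i, ENNReal.ofReal (l i) * (W2sq P (Pm i) + ε) := by
        gcongr with i
        exact (hcost i).trans_le (hπε i).le
    _ = phi l Pm P + ε := by
        simp_rw [mul_add]
        rw [Finset.sum_add_distrib, ← Finset.sum_mul, hweights, one_mul, phi]

theorem phi_map_centroid_add_le (hl : ∀ i, 0 ≤ l i) (hsum : ∑ i, l i = 1)
    (Γ : Measure (Pt d × (Fin N → Pt d))) (hΓ : ∀ i, Γ.map (fun p => p.2 i) = Pm i) :
    phi l Pm (Γ.map fun p => ∑ i, l i • p.2 i)
        + ∫⁻ p, ENNReal.ofReal (‖p.1 - ∑ i, l i • p.2 i‖ ^ 2) ∂Γ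
      ≤ ∑ i, ENNReal.ofReal (l i) * ∫⁻ p, ENNReal.ofReal (‖p.1 - p.2 i‖ ^ 2) ∂Γ := by
  have hW : ∀ i, W2sq (Γ.map fun p => ∑ j, l j • p.2 j) (Pm i)
      ≤ ∫⁻ p, ENNReal.ofReal (‖∑ j, l j • p.2 j - p.2 i‖ ^ 2) ∂Γ := fun i =>
    hΓ i ▸ W2sq_map_le Γ (by fun_prop) (by fun_prop)
  calc phi l Pm (Γ.map fun p => ∑ i, l i • p.2 i)
        + ∫⁻ p, ENNReal.ofReal (‖p.1 - ∑ i, l i • p.2 i‖ ^ 2) ∂Γ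
      ≤ ∑ i, ENNReal.ofReal (l i) * ∫⁻ p, ENNReal.ofReal (‖∑ j, l j • p.2 j - p.2 i‖ ^ 2) ∂Γ
        + ∫⁻ p, ENNReal.ofReal (‖p.1 - ∑ i, l i • p.2 i‖ ^ 2) ∂Γ := by
        unfold phi
        gcongr with i
        exact hW i
    _ = ∫⁻ p, (ENNReal.ofReal (‖p.1 - ∑ i, l i • p.2 i‖ ^ 2) + ∑ i, ENNReal.ofReal (l i)
          * ENNReal.ofReal (‖∑ j, l j • p.2 j - p.2 i‖ ^ 2)) ∂Γ := by
        rw [lintegral_add_left (by fun_prop), lintegral_finsetSum _ fun i _ => by fun_prop,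
          add_comm]
        congr 1
        exact Finset.sum_congr rfl fun i _ => (lintegral_const_mul _ (by fun_prop)).symm
    _ = ∫⁻ p, ∑ i, ENNReal.ofReal (l i) * ENNReal.ofReal (‖p.1 - p.2 i‖ ^ 2) ∂Γ :=
        lintegral_congr fun p => (sum_ofReal_mul_norm_sub_sq_eq hl hsum p.2 p.1).symm
    _ = _ := by
        rw [lintegral_finsetSum _ fun i _ => by fun_prop]
        exact Finset.sum_congr rfl fun i _ => lintegral_const_mul _ (by fun_prop)

theorem IsBarycenter.lintegral_infEDist_centroidSet_sq_le {P : Measure (Pt d)}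
    (hbar : IsBarycenter l Pm P) (hl : ∀ i, 0 < l i) (hsum : ∑ i, l i = 1)
    (hprob : ∀ i, IsProbabilityMeasure (Pm i)) (hfin : ∀ i, FinitelySupported (Pm i))
    {ε : ℝ≥0∞} (hε : ε ≠ 0) :
    ∫⁻ x, Metric.infEDist x (centroidSet l Pm) ^ 2 ∂P ≤ ε := by
  have hφ := (hbar.phi_lt_top hprob hfin).ne
  obtain ⟨hP, -, hmin⟩ := hbar
  obtain ⟨Γ, hΓ1, hΓi, hΓS, hΓcost⟩ := exists_multicoupling_lintegral_le hl hsum hfin hφ hε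
  have : IsProbabilityMeasure Γ := by
    have : IsProbabilityMeasure (Γ.map Prod.fst) := hΓ1 ▸ hP
    exact Measure.isProbabilityMeasure_of_map Prod.fst
  have hcentroid : ∀ᵐ p ∂Γ, ∑ i, l i • p.2 i ∈ centroidSet l Pm :=
    hΓS.mono fun p hp => ⟨p.2, hp, rfl⟩
  have hS := centroidSet_finite (l := l) fun i => (hfin i).1
  have hQ := hmin _ (Measure.isProbabilityMeasure_map (by fun_prop))
    (finiteSecondMoment_of_ae_mem hS.isBounded
      ((ae_map_iff (by fun_prop) hS.measurableSet).2 hcentroid))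
  have hR : phi l Pm P + ∫⁻ p, ENNReal.ofReal (‖p.1 - ∑ i, l i • p.2 i‖ ^ 2) ∂Γ
      ≤ phi l Pm P + ε :=
    ((add_le_add_left hQ _).trans
      (phi_map_centroid_add_le (fun i => (hl i).le) hsum Γ hΓi)).trans hΓcost
  calc ∫⁻ x, Metric.infEDist x (centroidSet l Pm) ^ 2 ∂P
      = ∫⁻ p, Metric.infEDist p.1 (centroidSet l Pm) ^ 2 ∂Γ := by
        rw [← hΓ1, lintegral_map (by fun_prop) measurable_fst]
    _ ≤ ∫⁻ p, ENNReal.ofReal (‖p.1 - ∑ i, l i • p.2 i‖ ^ 2) ∂Γ := by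
        refine lintegral_mono_ae (hcentroid.mono fun p hp => ?_)
        rw [ENNReal.ofReal_pow (norm_nonneg _), ← dist_eq_norm, ← edist_dist]
        gcongr
        exact Metric.infEDist_le_edist_of_mem hp
    _ ≤ ε := (ENNReal.add_le_add_iff_left hφ).1 hR

end Barycenter

/-- every barycenter is supported in the finite set S of weighted
centroids of combinations of support points; in particular it has finite support. -/
theorem barycenter_supported_in_centroidSet {d N : ℕ}
    (l : Fin N → ℝ) (Pm : Fin N → Measure (Pt d))
    (hl : ∀ i, 0 < l i) (hsum : ∑ i, l i = 1)
    (hprob : ∀ i, IsProbabilityMeasure (Pm i))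
    (hfin : ∀ i, FinitelySupported (Pm i))
    (Pbar : Measure (Pt d)) (hbar : IsBarycenter l Pm Pbar) :
    Pbar (centroidSet l Pm)ᶜ = 0 ∧ (msupp Pbar).Finite := by
  have hS := centroidSet_finite (l := l) fun i => (hfin i).1
  have hzero : ∫⁻ x, Metric.infEDist x (centroidSet l Pm) ^ 2 ∂Pbar = 0 :=
    nonpos_iff_eq_zero.1 <| ENNReal.le_of_forall_pos_le_add fun ε hε _ => by
      simpa using hbar.lintegral_infEDist_centroidSet_sq_le hl hsum hprob hfin
        (ENNReal.coe_ne_zero.2 hε.ne')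
  have hae := ae_mem_of_lintegral_infEDist_sq_eq_zero hS.isClosed hzero
  exact ⟨hae, hS.subset (msupp_subset_of_ae_mem hae)⟩
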